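/- Let V be a finite set and let r and s be relations on V. Write cp(t) for the number of equivalence classes of the equivalence relation generated by a relation t, and let M(r, s) be the set of equivalence classes C of the equivalence relation generated by r such that there exist x ∈ C and y ∉ C with s(x, y) or s(y, x). Then |M(r, s)| ≤ 2·(cp(r) − cp(r ⊔ s)); equivalently, |M(r, s)| + 2·cp(r ⊔ s) ≤ 2·cp(r). -/

import Mathlib

/-!
Send each merged component `C` to its class in `Quot r`. The `s`-edge leaving `C` glues `C` to a
different `r`-class, so this class lies in a fibre of size at least two of the natural surjection
`Quot r → Quot (r ⊔ s)`. For any surjection of finite sets, a fibre of size `k` contributes `k`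
elements lying in non-singleton fibres and `2` to twice the size of the codomain, and
`k + 2 ≤ 2k` once `k ≥ 2`, while a singleton fibre contributes `0 + 2 ≤ 2`.
-/

/-- The set of components (equivalence classes of the equivalence relation
generated by `r`) merged by the edge relation `s`: those classes `C` having an
edge of `s` with exactly one endpoint in `C`. -/
def mergedComponents {V : Type*} (r s : V → V → Prop) : Set (Set V) :=
  {C | (∃ a, C = {b | Relation.EqvGen r a b}) ∧
    ∃ x ∈ C, ∃ y, y ∉ C ∧ (s x y ∨ s y x)}

open Finset

lemma Finset.card_filter_exists_ne_add_two_le {α : Type*} [DecidableEq α] {F : Finset α}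
    (hF : F.Nonempty) : #{a ∈ F | ∃ a' ∈ F, a' ≠ a} + 2 ≤ 2 * #F := by
  have hpos := hF.card_pos
  by_cases hle : #F ≤ 1
  · have : {a ∈ F | ∃ a' ∈ F, a' ≠ a} = ∅ :=
      filter_eq_empty_iff.2 fun a ha ⟨a', ha', hne⟩ => hne (card_le_one_iff.1 hle ha' ha)
    rw [this, card_empty]
    omega
  · have := card_filter_le F fun a => ∃ a' ∈ F, a' ≠ a
    omega

lemma ncard_nontrivialFibers_add_two_mul_card_le {α β : Type*} [Finite α] {π : α → β}
    (hπ : Function.Surjective π) :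
    {a | ∃ a', a' ≠ a ∧ π a' = π a}.ncard + 2 * Nat.card β ≤ 2 * Nat.card α := by
  classical
  have := Fintype.ofFinite α
  have := Fintype.ofSurjective π hπ
  set fiber : β → Finset α := fun b => {a | π a = b}
  have hα : Nat.card α = ∑ b, #(fiber b) := by
    rw [Nat.card_eq_fintype_card, ← card_univ]
    exact card_eq_sum_card_fiberwise fun _ _ => mem_univ _
  have hS : {a | ∃ a', a' ≠ a ∧ π a' = π a}.ncard =
      ∑ b, #{a ∈ fiber b | ∃ a' ∈ fiber b, a' ≠ a} := by
    rw [Set.ncard_eq_toFinset_card', card_eq_sum_card_fiberwise fun _ _ => mem_univ (π _)]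
    refine sum_congr rfl fun b _ => congrArg card ?_
    ext a
    simp only [fiber, Set.mem_toFinset, Set.mem_ofPred_eq, mem_filter, mem_univ, true_and]
    constructor
    · rintro ⟨⟨a', hne, h⟩, rfl⟩; exact ⟨rfl, a', h, hne⟩
    · rintro ⟨rfl, a', h, hne⟩; exact ⟨⟨a', hne, h⟩, rfl⟩
  have hβ : Nat.card β = ∑ _b : β, 1 := by simp
  rw [hα, hS, hβ, mul_sum, mul_sum, ← sum_add_distrib]
  refine sum_le_sum fun b _ => ?_
  obtain ⟨a, rfl⟩ := hπ b
  simpa using card_filter_exists_ne_add_two_le (F := fiber (π a)) ⟨a, by simp [fiber]⟩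

lemma mergedComponents_subset_image {V : Type*} (r s : V → V → Prop) :
    mergedComponents r s ⊆ (fun q : Quot r => {b | q = Quot.mk r b}) ''
      {q | ∃ q', q' ≠ q ∧ Quot.mapRight (fun _ _ => Or.inl) q' =
        (Quot.mapRight (fun _ _ => Or.inl) q : Quot (r ⊔ s))} := by
  rintro C ⟨⟨a, rfl⟩, x, hx, y, hy, hxy⟩
  refine ⟨Quot.mk r a, ⟨Quot.mk r y, fun h => hy (Quot.eq.1 h.symm), ?_⟩, by simp only [Quot.eq]⟩
  show Quot.mk (r ⊔ s) y = Quot.mk (r ⊔ s) a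
  calc Quot.mk (r ⊔ s) y = Quot.mk (r ⊔ s) x := by
        rcases hxy with h | h
        · exact (Quot.sound (r := r ⊔ s) (Or.inr h)).symm
        · exact Quot.sound (r := r ⊔ s) (Or.inr h)
    _ = Quot.mk (r ⊔ s) a := Quot.eq.2 (hx.mono fun _ _ => Or.inl) |>.symm

/-- The number of components of the `r`-graph merged by `s` is at most twice the
drop in the number of components caused by adding the edges of `s`:
`|M(r,s)| ≤ 2 (cp r - cp (r ⊔ s))`, stated as
`|M(r,s)| + 2 cp (r ⊔ s) ≤ 2 cp r`. -/
theorem statement9 {V : Type*} [Finite V] (r s : V → V → Prop) :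
    (mergedComponents r s).ncard + 2 * Nat.card (Quot (r ⊔ s)) ≤
      2 * Nat.card (Quot r) := by
  set π : Quot r → Quot (r ⊔ s) := Quot.mapRight fun _ _ => Or.inl
  have hπ : Function.Surjective π := .of_comp (g := Quot.mk r) Quot.mk_surjective
  calc (mergedComponents r s).ncard + 2 * Nat.card (Quot (r ⊔ s))
      ≤ {q | ∃ q', q' ≠ q ∧ π q' = π q}.ncard + 2 * Nat.card (Quot (r ⊔ s)) := by
        gcongr
        exact (Set.ncard_le_ncard (mergedComponents_subset_image r s)).trans Set.ncard_image_le
    _ ≤ 2 * Nat.card (Quot r) := ncard_nontrivialFibers_add_two_mul_card_le hπ
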